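/- arXiv:2206.02301 — 4 statements merged into one kernel-verified Lean document; each statement's English description precedes it below -/
import Mathlib

section
/- For the Schwarzschild spatial metric, the mean curvature of an r-constant sphere satisfies the LAGPS-k condition √f(r) ∂_r k ≥ α k^2 (with k = (2/r)√f(r), f(r)=1-2m/r, m>0) if and only if r ≤ ((3+4α)/(1+2α)) m, for any constant α > -1/2 and r > 2m. -/
/-- Schwarzschild LAGPS-k condition: `√f ∂_r k ≥ α k²` iff `r ≤ ((3+4α)/(1+2α)) m`. -/
theorem schwarzschild_LAGPSk_iff
    (m : ℝ) (hm : 0 < m)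
    (f k : ℝ → ℝ)
    (hf : ∀ r, f r = 1 - 2 * m / r)
    (hk : ∀ r, k r = (2 / r) * Real.sqrt (f r))
    (α : ℝ) (hα : -1/2 < α) :
    ∀ r, 2 * m < r →
      (Real.sqrt (f r) * deriv k r ≥ α * (k r) ^ 2
        ↔ r ≤ ((3 + 4 * α) / (1 + 2 * α)) * m) := by
  intro r hr
  have hr0 : 0 < r := lt_trans (by positivity) hr
  have hfr : f r = 1 - 2 * m / r := hf r
  have hfpos : 0 < f r := by
    rw [hfr]
    have : 2 * m / r < 1 := (div_lt_one hr0).mpr hr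
    linarith
  set s := Real.sqrt (f r) with hsdef
  have hs : 0 < s := Real.sqrt_pos.mpr hfpos
  have hs2 : s ^ 2 = f r := Real.sq_sqrt hfpos.le
  have hkfun : k = fun x : ℝ => 2 / x * Real.sqrt (1 - 2 * m / x) := by
    funext x; rw [hk x, hf x]
  -- derivative of inner function
  have h1 : HasDerivAt (fun x : ℝ => 1 - 2 * m / x) (2 * m / r ^ 2) r := by
    have h := (hasDerivAt_const r (1:ℝ)).sub
      (((hasDerivAt_const r (2*m)).div (hasDerivAt_id r) hr0.ne'))
    exact h.congr_deriv (by simp only [id]; field_simp; ring)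
  have hne : (1 : ℝ) - 2 * m / r ≠ 0 := by rw [← hfr]; exact hfpos.ne'
  have h2 : HasDerivAt (fun x : ℝ => Real.sqrt (1 - 2 * m / x))
      (2 * m / r ^ 2 / (2 * Real.sqrt (1 - 2 * m / r))) r := h1.sqrt hne
  have h3 : HasDerivAt (fun x : ℝ => 2 / x) (-2 / r ^ 2) r := by
    have h := (hasDerivAt_const r (2:ℝ)).div (hasDerivAt_id r) hr0.ne'
    exact h.congr_deriv (by simp only [id]; field_simp; ring)
  have h4 := h3.mul h2
  have hsq : Real.sqrt (1 - 2 * m / r) = s := by rw [hsdef, hfr]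
  have hD : deriv k r = -2 / r ^ 2 * s + 2 / r * (2 * m / r ^ 2 / (2 * s)) := by
    rw [hkfun, show (fun x : ℝ => 2 / x * Real.sqrt (1 - 2 * m / x)) = ((fun x : ℝ => 2 / x) * fun x => Real.sqrt (1 - 2 * m / x)) from rfl, h4.deriv, hsq]
  have key : s * deriv k r = (6 * m - 2 * r) / r ^ 3 := by
    rw [hD]
    have hs' := hs.ne'
    have hpoly : s ^ 2 * r = r - 2 * m := by rw [hs2, hfr]; field_simp
    field_simp
    linear_combination (-2) * hpoly
  have hkr : k r = 2 / r * s := by rw [hk r, hsdef]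
  have hK2 : α * (k r) ^ 2 = 4 * α * (r - 2 * m) / r ^ 3 := by
    rw [hkr]
    have hpoly : s ^ 2 * r = r - 2 * m := by rw [hs2, hfr]; field_simp
    field_simp
    linear_combination (4 * α) * hpoly
  rw [ge_iff_le, key, hK2]
  rw [div_le_div_iff_of_pos_right (by positivity : (0:ℝ) < r ^ 3)]
  have h12 : (0:ℝ) < 1 + 2 * α := by linarith
  rw [div_mul_eq_mul_div, le_div_iff₀ h12]
  constructor <;> intro h <;> nlinarith
end

section
/- For the Schwarzschild spatial metric, the LAGPS-r condition √f(r) ∂_r k ≥ -(2/r^2)(1-γ) (where 2/r^2 is the intrinsic scalar curvature of the r-constant sphere) holds if and only if r ≤ 3m/γ, for any constant γ > 0 and r > 2m with γ such that 3m/γ > 2m. -/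
/-- Schwarzschild LAGPS-r condition: `√f ∂_r k ≥ -(2/r²)(1-γ)` iff `r ≤ 3m/γ`. -/
theorem schwarzschild_LAGPSr_iff
    (m : ℝ) (hm : 0 < m)
    (f k : ℝ → ℝ)
    (hf : ∀ r, f r = 1 - 2 * m / r)
    (hk : ∀ r, k r = (2 / r) * Real.sqrt (f r))
    (γ : ℝ) (hγ : 0 < γ) (hγ2 : 2 * m < 3 * m / γ) :
    ∀ r, 2 * m < r →
      (Real.sqrt (f r) * deriv k r ≥ -(2 / r ^ 2) * (1 - γ)
        ↔ r ≤ 3 * m / γ) := by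
  intro r hr
  have hr0 : 0 < r := lt_trans (by positivity) hr
  have hfr : f r = 1 - 2 * m / r := hf r
  have hupos : 0 < 1 - 2 * m / r := by
    rw [sub_pos, div_lt_one hr0]; exact hr
  set s : ℝ := Real.sqrt (1 - 2 * m / r) with hs
  have hspos : 0 < s := Real.sqrt_pos.mpr hupos
  have hss : s * s = 1 - 2 * m / r := Real.mul_self_sqrt hupos.le
  have hkfun : k = fun x => 2 / x * Real.sqrt (1 - 2 * m / x) :=
    funext fun x => by rw [hk x, hf x]
  -- derivative of the inner function
  have hu : HasDerivAt (fun x : ℝ => 1 - 2 * m / x) (2 * m / r ^ 2) r := by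
    have h1 : HasDerivAt (fun x : ℝ => 2 * m * x⁻¹) (2 * m * (-(r ^ 2)⁻¹)) r :=
      (hasDerivAt_inv hr0.ne').const_mul (2 * m)
    have h2 := h1.const_sub 1
    convert h2 using 1
    · rfl
    · rfl
    · funext x; ring
    · ring
  have hsq : HasDerivAt (fun x : ℝ => Real.sqrt (1 - 2 * m / x))
      (1 / (2 * s) * (2 * m / r ^ 2)) r := by
    exact (Real.hasDerivAt_sqrt hupos.ne').comp r hu
  have hq : HasDerivAt (fun x : ℝ => 2 / x) (2 * (-(r ^ 2)⁻¹)) r := by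
    exact (hasDerivAt_inv hr0.ne').const_mul 2
  have hkd : HasDerivAt k
      (2 * (-(r ^ 2)⁻¹) * s + 2 / r * (1 / (2 * s) * (2 * m / r ^ 2))) r := by
    rw [hkfun]; exact hq.mul hsq
  have hderiv : deriv k r =
      2 * (-(r ^ 2)⁻¹) * s + 2 / r * (1 / (2 * s) * (2 * m / r ^ 2)) := hkd.deriv
  have hsf : Real.sqrt (f r) = s := by rw [hfr]
  have hmain : Real.sqrt (f r) * deriv k r = (6 * m - 2 * r) / r ^ 3 := by
    rw [hsf, hderiv]
    have hs0 : s ≠ 0 := hspos.ne'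
    have hss' : s * s * r = r - 2 * m := by
      rw [hss]; field_simp
    field_simp
    linear_combination (-2) * hss' 
  have heq : -(2 / r ^ 2) * (1 - γ) = (-2 * r * (1 - γ)) / r ^ 3 := by
    field_simp
  rw [hmain, ge_iff_le, heq, div_le_div_iff_of_pos_right (by positivity : (0:ℝ) < r ^ 3),
    le_div_iff₀ hγ]
  constructor <;> intro h <;> nlinarith
end

section
/- For the Schwarzschild metric, the TAGPS-k condition K̄_{(n)} + k/2 ≤ -β k on an r-constant sphere (with K̄_{(n)} = -(m/r²) f^{-1/2} and k = 2√f/r) holds if and only if r ≤ ((3+4β)/(1+2β)) m, for β > -1/2 and 2m < r. -/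
/-- Schwarzschild TAGPS-k condition: `K̄_{(n)} ≤ -((2β+1)/2) k` iff
`r ≤ ((3+4β)/(1+2β)) m`, with `K̄_{(n)} = -(m/r²)/√f` and `k = 2√f/r`. -/
theorem schwarzschild_TAGPSk_iff
    (m : ℝ) (hm : 0 < m)
    (f : ℝ → ℝ) (hf : ∀ r, f r = 1 - 2 * m / r)
    (β : ℝ) (hβ : -1/2 < β) :
    ∀ r, 2 * m < r →
      (-(m / r ^ 2) / Real.sqrt (f r) ≤ -((2 * β + 1) / 2) * (2 * Real.sqrt (f r) / r)
        ↔ r ≤ ((3 + 4 * β) / (1 + 2 * β)) * m) := by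
  intro r hr
  have hr0 : 0 < r := lt_trans (by positivity) hr
  have hf0 : 0 < f r := by
    rw [hf]
    have : 2 * m / r < 1 := (div_lt_one hr0).2 hr
    linarith
  set s := Real.sqrt (f r) with hs_def
  have hs : 0 < s := Real.sqrt_pos.2 hf0
  have hs2 : s ^ 2 = f r := Real.sq_sqrt hf0.le
  have hrs : r * s ^ 2 = r - 2 * m := by
    rw [hs2, hf]; field_simp
  have hb : 0 < 1 + 2 * β := by linarith
  rw [div_le_iff₀ hs, div_mul_eq_mul_div, le_div_iff₀ hb]
  have heq : -((2 * β + 1) / 2) * (2 * s / r) * s = -((2 * β + 1) * s ^ 2) / r := by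
    ring
  rw [heq]
  rw [show -(m / r ^ 2) = (-m) / r ^ 2 by ring]
  rw [div_le_div_iff₀ (by positivity) hr0]
  have key : s ^ 2 * r ^ 2 = (r - 2 * m) * r := by rw [← hrs]; ring
  constructor
  · intro h
    nlinarith [key, hr0, h]
  · intro h
    nlinarith [key, hr0, h, mul_pos hr0 hr0]
end

section
/- Let k₁, k₂ be the principal curvatures at a point of a surface, and let K̄_{(n)}, k be reals with k = k₁ + k₂. If max over unit tangent s and sign choices of (K̄_{(n)} + k_{ab}s^a s^b - 2 s^a v_a) ≤ 0, then K̄_{(n)} ≤ -k/2. -/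
open Matrix

/-- If `max_s (K̄_{(n)} + k_{ab}s^a s^b - 2 s^a v_a) ≤ 0` over unit vectors `s`
(for a symmetric bilinear form `A` with principal curvatures `k₁, k₂` and trace
`k = k₁ + k₂`), then `K̄_{(n)} ≤ -k/2`. -/
theorem marginally_transversely_trapping_bound
    (A : Matrix (Fin 2) (Fin 2) ℝ) (hA : A.IsSymm)
    (k₁ k₂ : ℝ) (e₁ e₂ : Fin 2 → ℝ)
    (he₁ : e₁ ⬝ᵥ e₁ = 1) (he₂ : e₂ ⬝ᵥ e₂ = 1) (he₁₂ : e₁ ⬝ᵥ e₂ = 0)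
    (hv₁ : A.mulVec e₁ = k₁ • e₁) (hv₂ : A.mulVec e₂ = k₂ • e₂)
    (Kn k : ℝ) (hk : k = k₁ + k₂) (htr : A.trace = k)
    (v : Fin 2 → ℝ)
    (hmax : ∀ s : Fin 2 → ℝ, s ⬝ᵥ s = 1 →
        Kn + s ⬝ᵥ A.mulVec s - 2 * (s ⬝ᵥ v) ≤ 0) :
    Kn ≤ -k / 2 := by
  have h1 := hmax e₁ he₁
  have h2 := hmax e₂ he₂
  have h1' := hmax (-e₁) (by simpa using he₁)
  have h2' := hmax (-e₂) (by simpa using he₂)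
  simp only [Matrix.mulVec_neg, Matrix.neg_mulVec, neg_dotProduct,
    dotProduct_neg, hv₁, hv₂, dotProduct_smul, smul_eq_mul,
    he₁, he₂, mul_one, neg_neg] at h1 h2 h1' h2'
  linarith
end
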